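/- More generally, with the ansatz B(Σ,Ω) = Ω_V^{-a}Ω^{-b}, one has the identity div(B f⃗) = B·[(3/2)(5-2a-2b)(γΩ + 2Σ²) + √6 λ(a-1)Σ - 3(1+γ-bγ)] on the interior state space. -/

import Mathlib

/-- The `Σ`-component of the vector field. -/
noncomputable def fS (lam gam s w : ℝ) : ℝ :=
  -(2 - (-1 + 3 * s ^ 2 + 3 / 2 * gam * w)) * s + Real.sqrt (3 / 2) * lam * (1 - s ^ 2 - w)

/-- The `Ω`-component of the vector field. -/
noncomputable def fO (gam s w : ℝ) : ℝ :=
  (2 * (1 + (-1 + 3 * s ^ 2 + 3 / 2 * gam * w)) - 3 * gam) * w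

/-- The Dulac ansatz `B = Ω_V^{-a} Ω^{-b}`. -/
noncomputable def Bab (a b s w : ℝ) : ℝ := (1 - s ^ 2 - w) ^ (-a) * w ^ (-b)

/-! Since `∂ log B = -a ∂Ω_V / Ω_V - b ∂Ω / Ω`, the divergence of `B f⃗` is `B` times
`div f⃗ - a (f⃗ · ∇Ω_V) / Ω_V - b f_Ω / Ω`. Both quotients are polynomial: `f_Ω / Ω = 2(1+q) - 3γ`
by definition, and `Ω_V` obeys `Ω_V' = Ω_V (2(1+q) - √6 λ Σ)` along the flow. -/

theorem HasDerivAt.rpow_const_mul {V f : ℝ → ℝ} {V' f' x : ℝ} (p : ℝ) (hV : HasDerivAt V V' x)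
    (hf : HasDerivAt f f' x) (hx : V x ≠ 0) :
    HasDerivAt (fun y => V y ^ p * f y) (V x ^ p * (f' + p * V' / V x * f x)) x :=
  ((hV.rpow_const (Or.inl hx)).mul hf).congr_deriv (by rw [Real.rpow_sub_one hx]; ring)

theorem hasDerivAt_Bab_mul_fst (a b : ℝ) {g : ℝ → ℝ} {g' s w : ℝ} (hg : HasDerivAt g g' s)
    (hV : 1 - s ^ 2 - w ≠ 0) :
    HasDerivAt (fun x => Bab a b x w * g x)
      (Bab a b s w * (g' + 2 * a * s / (1 - s ^ 2 - w) * g s)) s := by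
  have hV' : HasDerivAt (fun x => 1 - x ^ 2 - w) (-(2 * s)) s := by
    simpa using ((hasDerivAt_pow 2 s).const_sub 1).sub_const w
  have h := hV'.rpow_const_mul (-a) (hg.const_mul (w ^ (-b))) hV
  simp only [Bab, mul_assoc]
  exact h.congr_deriv (by ring)

theorem hasDerivAt_Bab_mul_snd (a b : ℝ) {g : ℝ → ℝ} {g' s w : ℝ} (hg : HasDerivAt g g' w)
    (hV : 1 - s ^ 2 - w ≠ 0) (hw : w ≠ 0) :
    HasDerivAt (fun y => Bab a b s y * g y)
      (Bab a b s w * (g' + (a / (1 - s ^ 2 - w) - b / w) * g w)) w := by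
  have hV' : HasDerivAt (fun y => 1 - s ^ 2 - y) (-1) w := by
    simpa using (hasDerivAt_id w).const_sub (1 - s ^ 2)
  have h := hV'.rpow_const_mul (-a) ((hasDerivAt_id w).rpow_const_mul (-b) hg hw) hV
  simp only [Bab, mul_assoc]
  exact h.congr_deriv (by simp only [id]; ring)

theorem sqrt_six_eq_two_mul_sqrt_three_halves : Real.sqrt 6 = 2 * Real.sqrt (3 / 2) := by
  rw [show (6 : ℝ) = 2 ^ 2 * (3 / 2) by norm_num, Real.sqrt_mul (by positivity),
    Real.sqrt_sq (by norm_num)]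

theorem hasDerivAt_fS (lam gam s w : ℝ) :
    HasDerivAt (fun x => fS lam gam x w)
      (9 * s ^ 2 + 3 / 2 * gam * w - 3 - Real.sqrt 6 * lam * s) s := by
  have h := (((((hasDerivAt_pow 2 s).const_mul 3).const_add (-1)).add_const (3 / 2 * gam * w)
    |>.const_sub 2).fun_neg.fun_mul (hasDerivAt_id' s)).fun_add
      ((((hasDerivAt_pow 2 s).const_sub 1).sub_const w).const_mul (Real.sqrt (3 / 2) * lam))
  exact h.congr_deriv (by rw [sqrt_six_eq_two_mul_sqrt_three_halves]; norm_num; ring)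

theorem hasDerivAt_fO (gam s w : ℝ) :
    HasDerivAt (fun y => fO gam s y) (6 * s ^ 2 + 6 * gam * w - 3 * gam) w := by
  have h := ((((hasDerivAt_id' w).const_mul (3 / 2 * gam)).const_add (-1 + 3 * s ^ 2)).const_add 1
    |>.const_mul 2 |>.sub_const (3 * gam)).fun_mul (hasDerivAt_id' w)
  exact h.congr_deriv (by ring)

theorem two_mul_mul_fS_add_fO (lam gam s w : ℝ) :
    2 * s * fS lam gam s w + fO gam s w
      = (1 - s ^ 2 - w) * (Real.sqrt 6 * lam * s - (6 * s ^ 2 + 3 * gam * w)) := by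
  rw [fS, fO, sqrt_six_eq_two_mul_sqrt_three_halves]
  ring

theorem stmt_13 (lam gam a b : ℝ) :
    ∀ s w : ℝ, s ^ 2 + w < 1 → 0 < w →
      deriv (fun x => Bab a b x w * fS lam gam x w) s
          + deriv (fun y => Bab a b s y * fO gam s y) w
        = Bab a b s w * (3 / 2 * (5 - 2 * a - 2 * b) * (gam * w + 2 * s ^ 2)
            + Real.sqrt 6 * lam * (a - 1) * s - 3 * (1 + gam - b * gam)) := by
  intro s w hsw hw
  have hV : 1 - s ^ 2 - w ≠ 0 := by linarith
  rw [(hasDerivAt_Bab_mul_fst a b (hasDerivAt_fS lam gam s w) hV).deriv,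
    (hasDerivAt_Bab_mul_snd a b (hasDerivAt_fO gam s w) hV hw.ne').deriv]
  calc _ = Bab a b s w * (9 * s ^ 2 + 3 / 2 * gam * w - 3 - Real.sqrt 6 * lam * s
          + (6 * s ^ 2 + 6 * gam * w - 3 * gam)
          + a * ((2 * s * fS lam gam s w + fO gam s w) / (1 - s ^ 2 - w))
          - b * (fO gam s w / w)) := by ring
    _ = _ := by
      rw [two_mul_mul_fS_add_fO, mul_div_cancel_left₀ _ hV, fO, mul_div_cancel_right₀ _ hw.ne']
      ring
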